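/- The general solution of the Riccati equation y' − y² + (1/2)y(e^x/λ)(1+e^x/λ)^{−1} + (1/4)(1+e^x/λ)^{−1} = 0 obtained by this construction is y(x) = (1/2)·((a e^{−I} + 1)/(a e^{−I} − 1))·(1 + e^x/λ)^{−1/2}, i.e., this function is a solution for every constant a. -/

import Mathlib

/-! With `u = a e^{-I}` we have `u' = -u I'`, so `q = (u + 1)/(u - 1)` satisfies the Riccati
equation `q' = (q² - 1) I' / 2` of a hyperbolic cotangent. Since `I' = g := (1 + e^x/λ)^{-1/2}`
and `g' = -(1/2) g (e^x/λ)(1 + e^x/λ)⁻¹`, the product rule for `y = q g / 2` together with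
`g² = (1 + e^x/λ)⁻¹` gives the Riccati equation for `y`. -/

open Real

theorem hasDerivAt_cayley_mul_exp_neg {I : ℝ → ℝ} {k x : ℝ} (a : ℝ) (hI : HasDerivAt I k x)
    (hx : a * exp (-I x) ≠ 1) :
    HasDerivAt (fun t => (a * exp (-I t) + 1) / (a * exp (-I t) - 1))
      ((((a * exp (-I x) + 1) / (a * exp (-I x) - 1)) ^ 2 - 1) * k / 2) x := by
  have hu : HasDerivAt (fun t => a * exp (-I t)) (a * (exp (-I x) * -k)) x :=
    (hI.neg.exp).const_mul a
  have hden : a * exp (-I x) - 1 ≠ 0 := sub_ne_zero.mpr hx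
  refine ((hu.add_const 1).div (hu.sub_const 1) hden).congr_deriv ?_
  field_simp
  ring

theorem hasDerivAt_inv_sqrt {f : ℝ → ℝ} {f' x : ℝ} (hf : HasDerivAt f f' x) (hpos : 0 < f x) :
    HasDerivAt (fun t => (√(f t))⁻¹) (-(1 / 2) * (√(f x))⁻¹ * (f' * (f x)⁻¹)) x := by
  have hsqrt : √(f x) ≠ 0 := (sqrt_pos.mpr hpos).ne'
  refine ((hf.sqrt hpos.ne').inv hsqrt).congr_deriv ?_
  rw [sq_sqrt hpos.le]
  field_simp

theorem hasDerivAt_half_mul_of_riccati {q g : ℝ → ℝ} {c x : ℝ}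
    (hq : HasDerivAt q ((q x ^ 2 - 1) * g x / 2) x) (hg : HasDerivAt g (-(1 / 2) * g x * c) x) :
    HasDerivAt (fun t => 1 / 2 * q t * g t)
      ((1 / 2 * q x * g x) ^ 2 - 1 / 2 * (1 / 2 * q x * g x) * c - 1 / 4 * g x ^ 2) x :=
  ((hq.const_mul (1 / 2)).mul hg).congr_deriv (by ring)

/-- For `λ > 0`, `a ∈ ℝ`, and `I` an antiderivative of `(1+e^x/λ)^{−1/2}`,
the function `y(x) = (1/2)((a e^{−I}+1)/(a e^{−I}−1))(1+e^x/λ)^{−1/2}` solves the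
Riccati equation `y' − y² + (1/2)y(e^x/λ)(1+e^x/λ)^{−1} + (1/4)(1+e^x/λ)^{−1} = 0`
wherever `a e^{−I(x)} ≠ 1`. -/
theorem riccati_general_solution (lam a : ℝ) (hlam : 0 < lam)
    (I : ℝ → ℝ)
    (hI : ∀ x, HasDerivAt I ((Real.sqrt (1 + Real.exp x / lam))⁻¹) x)
    (y : ℝ → ℝ)
    (hy : ∀ x, y x = (1 / 2) * ((a * Real.exp (-I x) + 1) / (a * Real.exp (-I x) - 1))
        * (Real.sqrt (1 + Real.exp x / lam))⁻¹)
    (x : ℝ) (hx : a * Real.exp (-I x) ≠ 1) :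
    HasDerivAt y
      ((y x) ^ 2 - (1 / 2) * y x * (Real.exp x / lam) * (1 + Real.exp x / lam)⁻¹
        - (1 / 4) * (1 + Real.exp x / lam)⁻¹) x := by
  have hpos : 0 < 1 + exp x / lam := by positivity
  have hE : HasDerivAt (fun t => 1 + exp t / lam) (exp x / lam) x :=
    ((hasDerivAt_exp x).div_const lam).const_add 1
  have hy' := hasDerivAt_half_mul_of_riccati (hasDerivAt_cayley_mul_exp_neg a (hI x) hx)
    (hasDerivAt_inv_sqrt hE hpos)
  rw [hy x, funext hy]
  refine hy'.congr_deriv ?_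
  rw [inv_pow, sq_sqrt hpos.le]
  ring
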